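/- arXiv:1606.02197 — 2 statements merged into one kernel-verified Lean document; each statement's English description precedes it below -/
import Mathlib

section
/- Let μ be the uniform probability measure on the unit sphere S² ⊂ ℝ³ and let w ∈ ℝ³ with 0 < |w| < 1. Set R := |w|². Then ∫_{S²} Ibin(n·w) dμ(n) = ((1+R)·artanh(√R) − √R·(1 − ln(1−R))) / (√R · ln 4), where artanh is the inverse hyperbolic tangent. -/
open MeasureTheory Matrix

/-- Euclidean norm of a vector in ℝ³. -/
noncomputable def enorm3 (v : Fin 3 → ℝ) : ℝ := Real.sqrt (v 0 ^ 2 + v 1 ^ 2 + v 2 ^ 2)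

/-- Euclidean inner product on ℝ³. -/
def dot3 (v w : Fin 3 → ℝ) : ℝ := v 0 * w 0 + v 1 * w 1 + v 2 * w 2

/-- `μ` is the uniform (rotation-invariant) probability measure on the unit sphere
`S² = {v ∈ ℝ³ : |v| = 1}`: it is a probability measure, it gives full measure to the
sphere, and it is invariant under every orthogonal transformation of ℝ³. -/
def IsUniformSphereMeasure (μ : Measure (Fin 3 → ℝ)) : Prop :=
  IsProbabilityMeasure μ ∧
  μ {v | v 0 ^ 2 + v 1 ^ 2 + v 2 ^ 2 ≠ 1} = 0 ∧
  ∀ O : Matrix (Fin 3) (Fin 3) ℝ, O * Oᵀ = 1 → μ.map (Matrix.mulVec O) = μ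


/-- The binary mutual information `Ibin(x) = ((1+x)·log₂(1+x) + (1−x)·log₂(1−x))/2`. -/
noncomputable def Ibin (x : ℝ) : ℝ :=
  ((1 + x) * Real.logb 2 (1 + x) + (1 - x) * Real.logb 2 (1 - x)) / 2

/-- The inverse hyperbolic tangent. -/
noncomputable def artanh (x : ℝ) : ℝ := Real.log ((1 + x) / (1 - x)) / 2

/-! Rotation invariance of `μ` replaces `n·w` by `|w| n₀`. Expanding the rotation identity
`∫ (a nᵢ + n₀)^(2k) dμ = (1 + a²)^k ∫ n₀^(2k) dμ` in powers of `a` and integrating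
`n₀^(2k) (n₀² + n₁² + n₂²) = n₀^(2k)` over the sphere gives Archimedes' moments
`∫ n₀^(2k) dμ = 1/(2k+1)`. Integrating the power series
`Ibin y = ∑ y^(2k+2) / ((2k+1)(2k+2) ln 2)` term by term (dominated convergence on `|n₀| ≤ 1`)
leaves `∑ r^(2k+2) / ((2k+1)(2k+2)(2k+3) ln 2)`, which partial fractions reduce to the
`artanh` and `log (1 - r²)` series. -/

theorem exists_mem_orthogonalGroup_col_eq {d : ℕ} {u : EuclideanSpace ℝ (Fin d)} (hu : ‖u‖ = 1)
    (j : Fin d) : ∃ O ∈ orthogonalGroup (Fin d) ℝ, ∀ i, O i j = u i := by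
  have hv : Orthonormal ℝ (({j} : Set (Fin d)).domRestrict fun _ => u) := by
    rw [orthonormal_iff_ite]
    rintro ⟨a, rfl⟩ ⟨b, rfl⟩
    simp [hu]
  obtain ⟨b, hb⟩ := hv.exists_orthonormalBasis_extension_of_card_eq (by simp)
  refine ⟨(EuclideanSpace.basisFun (Fin d) ℝ).toBasis.toMatrix b,
    OrthonormalBasis.toMatrix_orthonormalBasis_mem_orthogonal _ _, fun i => ?_⟩
  rw [Module.Basis.toMatrix_apply, hb j rfl]
  simp

theorem dot3_eq_dotProduct (v w : Fin 3 → ℝ) : dot3 v w = v ⬝ᵥ w := by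
  simp [dot3, dotProduct, Fin.sum_univ_three]

theorem enorm3_eq_norm (v : Fin 3 → ℝ) : enorm3 v = ‖WithLp.toLp 2 v‖ := by
  simp [enorm3, EuclideanSpace.norm_eq, Fin.sum_univ_three]

theorem exists_mem_orthogonalGroup_dot3_mulVec {w : Fin 3 → ℝ} (hw : w ≠ 0) :
    ∃ O ∈ orthogonalGroup (Fin 3) ℝ, ∀ n, dot3 (O *ᵥ n) w = enorm3 w * n 0 := by
  have hr : 0 < enorm3 w := by simpa [enorm3_eq_norm] using hw
  obtain ⟨O, hO, hcol⟩ := exists_mem_orthogonalGroup_col_eq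
    (u := WithLp.toLp 2 ((enorm3 w)⁻¹ • w)) (by
      rw [WithLp.toLp_smul, norm_smul, ← enorm3_eq_norm, Real.norm_of_nonneg (by positivity)]
      exact inv_mul_cancel₀ hr.ne') 0
  have hw_col : w = enorm3 w • O *ᵥ Pi.single 0 1 := by
    ext i
    simp [hcol, hr.ne']
  have hOw : Oᵀ *ᵥ w = enorm3 w • Pi.single 0 1 := by
    conv_lhs => rw [hw_col]
    rw [mulVec_smul, mulVec_mulVec, (mem_orthogonalGroup_iff' _ _).1 hO, one_mulVec]
  refine ⟨O, hO, fun n => ?_⟩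
  rw [dot3_eq_dotProduct, dotProduct_comm, dotProduct_mulVec, ← mulVec_transpose, hOw]
  simp

theorem hasSum_artanh {y : ℝ} (hy : |y| < 1) :
    HasSum (fun k : ℕ => y ^ (2 * k + 1) / (2 * k + 1)) (artanh y) := by
  obtain ⟨hy₁, hy₂⟩ := abs_lt.1 hy
  rw [artanh, Real.log_div (by linarith) (by linarith)]
  exact (Real.hasSum_log_sub_log_of_abs_lt_one hy).div_const 2 |>.congr_fun fun k => by ring

theorem hasSum_pow_two_mul_add_two_div {y : ℝ} (hy : |y| < 1) :
    HasSum (fun k : ℕ => y ^ (2 * k + 2) / (2 * k + 2)) (-Real.log (1 - y ^ 2) / 2) := by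
  have hy2 : |y ^ 2| < 1 := by rw [abs_pow]; exact pow_lt_one₀ (abs_nonneg y) hy two_ne_zero
  refine (Real.hasSum_pow_div_log_of_abs_lt_one hy2).div_const 2 |>.congr_fun fun k => ?_
  rw [← pow_mul, div_div]
  ring

theorem Ibin_eq {y : ℝ} (hy : |y| < 1) :
    Ibin y = (y * artanh y + Real.log (1 - y ^ 2) / 2) / Real.log 2 := by
  obtain ⟨hy₁, hy₂⟩ := abs_lt.1 hy
  rw [Ibin, artanh, Real.logb, Real.logb, Real.log_div (by linarith) (by linarith),
    show 1 - y ^ 2 = (1 + y) * (1 - y) by ring, Real.log_mul (by linarith) (by linarith)]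
  ring

theorem hasSum_Ibin {y : ℝ} (hy : |y| < 1) :
    HasSum (fun k : ℕ => y ^ (2 * k + 2) / ((2 * k + 1) * (2 * k + 2) * Real.log 2))
      (Ibin y) := by
  have h := ((hasSum_artanh hy).mul_left y).sub (hasSum_pow_two_mul_add_two_div hy)
    |>.div_const (Real.log 2)
  rw [Ibin_eq hy, ← sub_neg_eq_add, ← neg_div]
  refine h.congr_fun fun k => ?_
  field_simp
  ring

theorem hasSum_pow_div_mul_mul_mul_log_two {y : ℝ} (hy₀ : y ≠ 0) (hy : |y| < 1) :
    HasSum (fun k : ℕ => y ^ (2 * k + 2) / ((2 * k + 1) * (2 * k + 2) * (2 * k + 3) * Real.log 2))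
      (((1 + y ^ 2) * artanh y - y * (1 - Real.log (1 - y ^ 2))) / (y * Real.log 4)) := by
  have hshift : HasSum (fun k : ℕ => y ^ (2 * k + 2) / (2 * k + 3)) ((artanh y - y) / y) := by
    have h := (hasSum_nat_add_iff' 1).2 (hasSum_artanh hy) |>.div_const y
    rw [Finset.sum_range_one] at h
    refine (by simpa using h : HasSum _ _).congr_fun fun k => ?_
    rw [show 2 * (k + 1) + 1 = 2 * k + 2 + 1 by ring, pow_succ]
    field_simp
    ring
  -- `1 / ((2k+1)(2k+2)(2k+3)) = 1 / (2(2k+1)) - 1 / (2k+2) + 1 / (2(2k+3))`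
  have h := ((hasSum_artanh hy).mul_left (y / 2)).sub (hasSum_pow_two_mul_add_two_div hy)
    |>.add (hshift.div_const 2) |>.div_const (Real.log 2)
  have hlog4 : Real.log 4 = 2 * Real.log 2 := by
    rw [show (4 : ℝ) = 2 ^ 2 by norm_num, Real.log_pow]
    norm_num
  refine (congrArg (HasSum _) ?_).mp (h.congr_fun fun k => ?_)
  · rw [hlog4]
    field_simp
    ring
  · field_simp
    ring

theorem measurable_Ibin : Measurable Ibin := by
  unfold Ibin Real.logb
  fun_prop

namespace IsUniformSphereMeasure

variable {μ : Measure (Fin 3 → ℝ)}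

theorem ae_sum_sq_eq_one (hμ : IsUniformSphereMeasure μ) :
    ∀ᵐ n ∂μ, n 0 ^ 2 + n 1 ^ 2 + n 2 ^ 2 = 1 :=
  ae_iff.2 hμ.2.1

theorem ae_abs_le_one (hμ : IsUniformSphereMeasure μ) (i : Fin 3) : ∀ᵐ n ∂μ, |n i| ≤ 1 := by
  filter_upwards [hμ.ae_sum_sq_eq_one] with n hn
  rw [← sq_le_one_iff_abs_le_one]
  fin_cases i <;> dsimp <;> nlinarith [sq_nonneg (n 0), sq_nonneg (n 1), sq_nonneg (n 2)]

theorem integrable_pow_mul_pow (hμ : IsUniformSphereMeasure μ) (i j : Fin 3) (p q : ℕ) :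
    Integrable (fun n => n i ^ p * n j ^ q) μ := by
  have := hμ.1
  refine .of_bound (by fun_prop) 1 ?_
  filter_upwards [hμ.ae_abs_le_one i, hμ.ae_abs_le_one j] with n hi hj
  rw [norm_mul, norm_pow, norm_pow]
  exact mul_le_one₀ (pow_le_one₀ (norm_nonneg _) hi) (by positivity)
    (pow_le_one₀ (norm_nonneg _) hj)

theorem integral_comp_mulVec (hμ : IsUniformSphereMeasure μ) {O : Matrix (Fin 3) (Fin 3) ℝ}
    (hO : O ∈ orthogonalGroup (Fin 3) ℝ) {f : (Fin 3 → ℝ) → ℝ} (hf : AEStronglyMeasurable f μ) :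
    ∫ n, f (O *ᵥ n) ∂μ = ∫ n, f n ∂μ := by
  have hmap := hμ.2.2 O (mem_orthogonalGroup_iff _ _ |>.1 hO)
  rw [← integral_map (by fun_prop) (hmap.symm ▸ hf), hmap]

theorem integral_comp_dot3 (hμ : IsUniformSphereMeasure μ) (w : Fin 3 → ℝ) {g : ℝ → ℝ}
    (hg : Measurable g) : ∫ n, g (dot3 n w) ∂μ = ∫ n, g (enorm3 w * n 0) ∂μ := by
  rcases eq_or_ne w 0 with rfl | hw
  · simp [dot3, enorm3]
  obtain ⟨O, hO, hdot⟩ := exists_mem_orthogonalGroup_dot3_mulVec hw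
  have hf : Measurable fun n => g (dot3 n w) := hg.comp (by unfold dot3; fun_prop)
  rw [← hμ.integral_comp_mulVec hO hf.aestronglyMeasurable]
  simp only [hdot]

theorem integral_mul_coord_add_pow (hμ : IsUniformSphereMeasure μ) {i : Fin 3} (hi : i ≠ 0)
    (a : ℝ) (k : ℕ) :
    ∫ n, (a * n i + n 0) ^ (2 * k) ∂μ = (a ^ 2 + 1) ^ k * ∫ n, n 0 ^ (2 * k) ∂μ := by
  obtain ⟨w, hdot, hnorm⟩ : ∃ w, (∀ n, dot3 n w = a * n i + n 0) ∧ enorm3 w ^ 2 = a ^ 2 + 1 := by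
    fin_cases i
    · exact absurd rfl hi
    · refine ⟨![1, a, 0], fun n => by simp [dot3]; ring, ?_⟩
      rw [enorm3, Real.sq_sqrt (by positivity)]; simp; ring
    · refine ⟨![1, 0, a], fun n => by simp [dot3]; ring, ?_⟩
      rw [enorm3, Real.sq_sqrt (by positivity)]; simp; ring
  simp only [← hdot]
  rw [hμ.integral_comp_dot3 w (g := (· ^ (2 * k))) (by fun_prop), ← integral_const_mul, ← hnorm]
  simp only [mul_pow, pow_mul]

open Finset Polynomial in
theorem mul_integral_sq_mul_pow (hμ : IsUniformSphereMeasure μ) {i : Fin 3} (hi : i ≠ 0) (k : ℕ) :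
    (2 * k + 1) * ∫ n, n i ^ 2 * n 0 ^ (2 * k) ∂μ = ∫ n, n 0 ^ (2 * (k + 1)) ∂μ := by
  set N := 2 * (k + 1)
  set M : ℕ → ℝ := fun j => ∫ n, n i ^ j * n 0 ^ (N - j) ∂μ
  have hpoly : ∑ j ∈ range (N + 1), C (N.choose j * M j) * X ^ j =
      C (∫ n, n 0 ^ N ∂μ) * (X ^ 2 + 1) ^ (k + 1) := by
    refine Polynomial.funext fun a => ?_
    have hexp : ∀ n : Fin 3 → ℝ, (a * n i + n 0) ^ N =
        ∑ j ∈ range (N + 1), a ^ j * N.choose j * (n i ^ j * n 0 ^ (N - j)) := fun n => by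
      rw [add_pow]; exact sum_congr rfl fun j _ => by ring
    have h : ∫ n, (a * n i + n 0) ^ N ∂μ = (a ^ 2 + 1) ^ (k + 1) * ∫ n, n 0 ^ N ∂μ :=
      hμ.integral_mul_coord_add_pow hi a (k + 1)
    simp only [hexp] at h
    rw [integral_finsetSum _ fun j _ => (hμ.integrable_pow_mul_pow i 0 j (N - j)).const_mul _] at h
    simp only [eval_finsetSum, eval_mul, eval_C, eval_pow, eval_X, eval_add, eval_one]
    rw [mul_comm, ← h]
    refine sum_congr rfl fun j _ => ?_
    rw [integral_const_mul]
    ring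
  have hcoeff := congrArg (coeff · 2) hpoly
  have hX : ((X ^ 2 + 1 : ℝ[X]) ^ (k + 1)).coeff 2 = k + 1 := by
    rw [show (X ^ 2 + 1 : ℝ[X]) ^ (k + 1) = expand ℝ 2 ((X + 1) ^ (k + 1)) by simp,
      coeff_expand two_pos]
    simp [coeff_X_add_one_pow]
  simp only [finsetSum_coeff, coeff_C_mul, coeff_X_pow, hX, mul_ite, mul_one, mul_zero,
    sum_ite_eq, mem_range] at hcoeff
  have hchoose : N.choose 2 = (k + 1) * (2 * k + 1) := by
    rw [Nat.choose_two_right, show N - 1 = 2 * k + 1 by omega]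
    exact Nat.div_eq_of_eq_mul_left two_pos (by ring)
  rw [if_pos (by omega), hchoose, show M 2 = ∫ n, n i ^ 2 * n 0 ^ (2 * k) ∂μ by
    simp only [M, show N - 2 = 2 * k by omega]] at hcoeff
  push_cast at hcoeff
  exact mul_right_cancel₀ (by positivity : (k + 1 : ℝ) ≠ 0) (by linear_combination hcoeff)

theorem integral_pow_eq_add (hμ : IsUniformSphereMeasure μ) (k : ℕ) :
    ∫ n, n 0 ^ (2 * k) ∂μ = ∫ n, n 0 ^ (2 * (k + 1)) ∂μ + ∫ n, n 1 ^ 2 * n 0 ^ (2 * k) ∂μ +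
      ∫ n, n 2 ^ 2 * n 0 ^ (2 * k) ∂μ := by
  have h0 : Integrable (fun n : Fin 3 → ℝ => n 0 ^ (2 * (k + 1))) μ := by
    simpa using hμ.integrable_pow_mul_pow 0 0 (2 * (k + 1)) 0
  have h1 := hμ.integrable_pow_mul_pow 1 0 2 (2 * k)
  have h2 := hμ.integrable_pow_mul_pow 2 0 2 (2 * k)
  have h01 : Integrable (fun n : Fin 3 → ℝ => n 0 ^ (2 * (k + 1)) + n 1 ^ 2 * n 0 ^ (2 * k)) μ :=
    h0.add h1
  rw [← integral_add h0 h1, ← integral_add h01 h2]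
  refine integral_congr_ae ?_
  filter_upwards [hμ.ae_sum_sq_eq_one] with n hn
  linear_combination (-n 0 ^ (2 * k)) * hn

theorem integral_pow_two_mul (hμ : IsUniformSphereMeasure μ) (k : ℕ) :
    ∫ n, n 0 ^ (2 * k) ∂μ = 1 / (2 * k + 1) := by
  have := hμ.1
  induction k with
  | zero => simp
  | succ k ih =>
    have h1 := hμ.mul_integral_sq_mul_pow (i := 1) (by decide) k
    have h2 := hμ.mul_integral_sq_mul_pow (i := 2) (by decide) k
    have hsplit := hμ.integral_pow_eq_add k
    rw [ih] at hsplit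
    push_cast
    field_simp at hsplit ⊢
    linear_combination -hsplit - h1 - h2

theorem hasSum_integral_Ibin_mul_coord (hμ : IsUniformSphereMeasure μ) {r : ℝ} (hr : |r| < 1) :
    HasSum (fun k : ℕ => r ^ (2 * k + 2) / ((2 * k + 1) * (2 * k + 2) * (2 * k + 3) * Real.log 2))
      (∫ n, Ibin (r * n 0) ∂μ) := by
  have := hμ.1
  set c : ℕ → ℝ := fun k => (2 * k + 1) * (2 * k + 2) * Real.log 2
  have hc : ∀ k, 0 < c k := fun k => by have := Real.log_pos one_lt_two; positivity
  have habs : ∀ n : Fin 3 → ℝ, |n 0| ≤ 1 → |r * n 0| ≤ |r| := fun n hn => by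
    rw [abs_mul]
    exact mul_le_of_le_one_right (abs_nonneg r) hn
  have h := hasSum_integral_of_dominated_convergence (μ := μ)
    (F := fun k n => (r * n 0) ^ (2 * k + 2) / c k) (f := fun n => Ibin (r * n 0))
    (fun k _ => r ^ (2 * k + 2) / c k)
    (fun k => (by fun_prop : Continuous _).aestronglyMeasurable) (fun k => ?bound)
    (.of_forall fun _ => (hasSum_Ibin hr).summable) (integrable_const _) ?lim
  case bound =>
    filter_upwards [hμ.ae_abs_le_one 0] with n hn
    rw [norm_div, norm_pow, Real.norm_of_nonneg (hc k).le, Real.norm_eq_abs,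
      ← Even.pow_abs ⟨k + 1, by ring⟩ r]
    exact div_le_div_of_nonneg_right (pow_le_pow_left₀ (abs_nonneg _) (habs n hn) _) (hc k).le
  case lim =>
    filter_upwards [hμ.ae_abs_le_one 0] with n hn
    exact hasSum_Ibin ((habs n hn).trans_lt hr)
  refine h.congr_fun fun k => ?_
  simp only [mul_pow, integral_div, integral_const_mul, c]
  rw [show 2 * k + 2 = 2 * (k + 1) by ring, hμ.integral_pow_two_mul]
  push_cast
  field_simp
  ring

end IsUniformSphereMeasure

/-- Average of `Ibin(n·w)` over the uniform measure on the sphere, for `0 < |w| < 1`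
and `R = |w|²`:
`∫ Ibin(n·w) dμ(n) = ((1+R)·artanh√R − √R(1 − ln(1−R))) / (√R · ln 4)`. -/
theorem stmt2 (μ : Measure (Fin 3 → ℝ)) (hμ : IsUniformSphereMeasure μ)
    (w : Fin 3 → ℝ) (hw0 : 0 < enorm3 w) (hw1 : enorm3 w < 1)
    (R : ℝ) (hR : R = enorm3 w ^ 2) :
    ∫ n, Ibin (dot3 n w) ∂μ =
      ((1 + R) * artanh (Real.sqrt R) - Real.sqrt R * (1 - Real.log (1 - R))) /
        (Real.sqrt R * Real.log 4) := by
  have hr : |enorm3 w| < 1 := by rwa [abs_of_pos hw0]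
  rw [hμ.integral_comp_dot3 w measurable_Ibin, hR, Real.sqrt_sq hw0.le]
  exact (hμ.hasSum_integral_Ibin_mul_coord hr).unique
    (hasSum_pow_div_mul_mul_mul_log_two hw0.ne' hr)
end

section
/- For 0 < κ ≤ 1 and a unit vector ĉ = (c₁,c₂,c₃) ∈ ℝ³, define the average gain ⟨G⟩(κ,ĉ) := ∫_{S²} Ibin(κ·√(c₁²n₁² + c₂²n₂² + c₃²n₃²)) dμ(n). Then for every 0 < κ ≤ 1 and every unit vector ĉ, ⟨G⟩(κ, (1,1,1)/√3) ≤ ⟨G⟩(κ, ĉ) ≤ ⟨G⟩(κ, (0,0,1)); that is, at fixed κ ≤ 1 the minimum over directions is attained at the isotropic direction and the maximum at the direction with a single nonzero component. -/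
open MeasureTheory Matrix

/-- The average RSP gain `⟨G⟩(κ,ĉ)` for the MMMS with correlation matrix
`E = κ·diag(c₁,c₂,c₃)`, averaged over the sphere of target states. -/
noncomputable def avgG (μ : Measure (Fin 3 → ℝ)) (κ : ℝ) (c : Fin 3 → ℝ) : ℝ :=
  ∫ n, Ibin (κ * Real.sqrt (c 0 ^ 2 * n 0 ^ 2 + c 1 ^ 2 * n 1 ^ 2 + c 2 ^ 2 * n 2 ^ 2)) ∂μ

/-!
Write `diagForm c n = ∑ cᵢ² nᵢ²`, so that `⟨G⟩(κ, c) = ∫ F (diagForm c n) dμ` with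
`F t = Ibin (κ √t)`. For `0 < κ ≤ 1` the profile `F` is convex on `[0, 1]`: its derivative is
`κ² / (4 log 2) · A (κ √t)` with `A s = (log (1 + s) - log (1 - s)) / s = ∑ 2 s^(2k) / (2k + 1)`,
which increases with `t`.

Permutation matrices are orthogonal, so `∫ F (nᵢ²) dμ` does not depend on `i`, and in particular
`∫ nᵢ² dμ = 1/3`. Jensen's inequality for the integral gives
`F (1/3) = F (∫ diagForm c n dμ) ≤ ∫ F (diagForm c n) dμ`, and `F (1/3)` is the isotropic value.
Pointwise Jensen with the weights `cᵢ²` gives `F (diagForm c n) ≤ ∑ cᵢ² F (nᵢ²)`, whose integral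
is the value at `(0, 0, 1)`.
-/

open Set Real

theorem Ibin_eq_mul_log :
    Ibin = fun x => ((1 + x) * log (1 + x) + (1 - x) * log (1 - x)) / (2 * log 2) := by
  funext x
  simp only [Ibin, logb]
  ring

@[fun_prop]
theorem continuous_Ibin : Continuous Ibin := by
  rw [Ibin_eq_mul_log]
  have := continuous_mul_log
  fun_prop

theorem hasDerivAt_Ibin {x : ℝ} (hx : |x| < 1) :
    HasDerivAt Ibin ((log (1 + x) - log (1 - x)) / (2 * log 2)) x := by
  obtain ⟨hx₁, hx₂⟩ := abs_lt.1 hx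
  have hp := (hasDerivAt_mul_log (by linarith : 1 + x ≠ 0)).comp x
    ((hasDerivAt_id x).const_add 1)
  have hm := (hasDerivAt_mul_log (by linarith : 1 - x ≠ 0)).comp x
    ((hasDerivAt_id x).const_sub 1)
  rw [Ibin_eq_mul_log]
  refine ((hp.add hm).div_const (2 * log 2)).congr_deriv ?_
  ring

theorem monotoneOn_log_sub_log_div :
    MonotoneOn (fun s => (log (1 + s) - log (1 - s)) / s) (Ioo 0 1) := by
  have hsum : ∀ s ∈ Ioo (0 : ℝ) 1, HasSum (fun k : ℕ => 2 * (1 / (2 * k + 1)) * s ^ (2 * k))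
      ((log (1 + s) - log (1 - s)) / s) := by
    intro s hs
    have h := (hasSum_log_sub_log_of_abs_lt_one (abs_lt.2 ⟨by linarith [hs.1], hs.2⟩)).div_const s
    simpa only [pow_succ, ← mul_assoc, mul_div_cancel_right₀ _ hs.1.ne'] using h
  intro s hs t ht hst
  exact hasSum_le (fun k => by gcongr; exact hs.1.le) (hsum s hs) (hsum t ht)

theorem convexOn_Ibin_mul_sqrt {κ : ℝ} (hκ₀ : 0 < κ) (hκ₁ : κ ≤ 1) :
    ConvexOn ℝ (Icc 0 1) fun t => Ibin (κ * √t) := by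
  have hmem : ∀ t ∈ Ioo (0 : ℝ) 1, κ * √t ∈ Ioo (0 : ℝ) 1 := fun t ht =>
    ⟨by have := sqrt_pos.2 ht.1; positivity, (mul_le_of_le_one_left (sqrt_nonneg t) hκ₁).trans_lt
      (by simpa using sqrt_lt_sqrt ht.1.le ht.2)⟩
  have hderiv : ∀ t ∈ Ioo (0 : ℝ) 1, HasDerivAt (fun t => Ibin (κ * √t))
      (κ ^ 2 / (4 * log 2) * ((log (1 + κ * √t) - log (1 - κ * √t)) / (κ * √t))) t := by
    intro t ht
    obtain ⟨hs₀, hs₁⟩ := hmem t ht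
    refine ((hasDerivAt_Ibin (abs_lt.2 ⟨by linarith, hs₁⟩)).comp t
      ((hasDerivAt_sqrt ht.1.ne').const_mul κ)).congr_deriv ?_
    have : 0 < √t := sqrt_pos.2 ht.1
    field_simp
    ring
  refine MonotoneOn.convexOn_of_deriv (convex_Icc 0 1) (by fun_prop) ?_ ?_ <;> rw [interior_Icc]
  · exact fun t ht => (hderiv t ht).differentiableAt.differentiableWithinAt
  · refine MonotoneOn.congr ?_ fun t ht => (hderiv t ht).deriv.symm
    intro s hs t ht hst
    exact mul_le_mul_of_nonneg_left
      (monotoneOn_log_sub_log_div (hmem s hs) (hmem t ht) (by gcongr)) (by positivity)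

def diagForm {ι : Type*} [Fintype ι] (c n : ι → ℝ) : ℝ := ∑ i, c i ^ 2 * n i ^ 2

section DiagForm

variable {ι : Type*} [Fintype ι]

theorem sq_le_one_of_sum_sq_eq_one {n : ι → ℝ} (hn : ∑ i, n i ^ 2 = 1) (i : ι) : n i ^ 2 ≤ 1 :=
  hn ▸ Finset.single_le_sum (fun j _ => sq_nonneg (n j)) (Finset.mem_univ i)

theorem diagForm_mem_Icc {c n : ι → ℝ} (hc : ∑ i, c i ^ 2 = 1) (hn : ∑ i, n i ^ 2 = 1) :
    diagForm c n ∈ Icc 0 1 := by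
  refine ⟨by unfold diagForm; positivity, ?_⟩
  calc diagForm c n ≤ ∑ i, 1 * n i ^ 2 :=
        Finset.sum_le_sum fun i _ => by gcongr; exact sq_le_one_of_sum_sq_eq_one hc i
    _ = 1 := by simp [hn]

@[fun_prop]
theorem continuous_diagForm (c : ι → ℝ) : Continuous (diagForm c) := by
  unfold diagForm
  fun_prop

end DiagForm

section InvariantMeasure

variable {ι : Type*} [Fintype ι] {μ : Measure (ι → ℝ)}

theorem integrable_of_continuous_of_ae_sum_sq_eq_one [IsFiniteMeasure μ]
    (hS : ∀ᵐ n ∂μ, ∑ i, n i ^ 2 = 1) {g : (ι → ℝ) → ℝ} (hg : Continuous g) : Integrable g μ := by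
  have hK : IsCompact {n : ι → ℝ | ∑ i, n i ^ 2 = 1} := by
    refine (isCompact_Icc (a := -1) (b := 1)).of_isClosed_subset
      (isClosed_eq (by fun_prop) continuous_const) fun n hn => ?_
    have h i := abs_le.1 <| (sq_le_one_iff_abs_le_one (n i)).1 (sq_le_one_of_sum_sq_eq_one hn i)
    exact ⟨fun i => (h i).1, fun i => (h i).2⟩
  rw [← Measure.restrict_eq_self_of_ae_mem hS]
  exact hg.continuousOn.integrableOn_compact hK

theorem map_comp_perm_eq [DecidableEq ι]
    (hO : ∀ O : Matrix ι ι ℝ, O * Oᵀ = 1 → μ.map (mulVec O) = μ) (σ : Equiv.Perm ι) :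
    μ.map (fun n => n ∘ σ) = μ := by
  have horth : σ.permMatrix ℝ * (σ.permMatrix ℝ)ᵀ = 1 := by
    rw [transpose_permMatrix, ← permMatrix_mul, inv_mul_cancel, permMatrix_one]
  have hmulVec : (σ.permMatrix ℝ).mulVec = fun n => n ∘ σ :=
    funext fun _ => permMatrix_mulVec σ
  rw [← hmulVec]
  exact hO _ horth

theorem integral_comp_perm [DecidableEq ι] {E : Type*} [NormedAddCommGroup E] [NormedSpace ℝ E]
    (hO : ∀ O : Matrix ι ι ℝ, O * Oᵀ = 1 → μ.map (mulVec O) = μ) (σ : Equiv.Perm ι)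
    (g : (ι → ℝ) → E) : ∫ n, g (n ∘ σ) ∂μ = ∫ n, g n ∂μ := by
  conv_rhs => rw [← map_comp_perm_eq hO σ]
  exact ((LinearEquiv.funCongrLeft ℝ ℝ σ).toContinuousLinearEquiv.toHomeomorph
    |>.measurableEmbedding.integral_map g).symm

theorem integral_comp_apply_eq [DecidableEq ι] {E : Type*} [NormedAddCommGroup E]
    [NormedSpace ℝ E] (hO : ∀ O : Matrix ι ι ℝ, O * Oᵀ = 1 → μ.map (mulVec O) = μ)
    (g : ℝ → E) (i j : ι) : ∫ n, g (n i) ∂μ = ∫ n, g (n j) ∂μ := by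
  simpa using integral_comp_perm hO (Equiv.swap i j) (fun n => g (n j))

variable [DecidableEq ι] [IsProbabilityMeasure μ]

theorem integral_sq_apply (hS : ∀ᵐ n ∂μ, ∑ i, n i ^ 2 = 1)
    (hO : ∀ O : Matrix ι ι ℝ, O * Oᵀ = 1 → μ.map (mulVec O) = μ) (i : ι) :
    ∫ n, n i ^ 2 ∂μ = (Fintype.card ι : ℝ)⁻¹ := by
  refine eq_inv_of_mul_eq_one_right ?_
  calc (Fintype.card ι : ℝ) * ∫ n, n i ^ 2 ∂μ = ∑ j : ι, ∫ n, n j ^ 2 ∂μ := by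
        simp [integral_comp_apply_eq hO (· ^ 2) _ i]
    _ = ∫ n, ∑ j, n j ^ 2 ∂μ := (integral_finsetSum _ fun j _ =>
        integrable_of_continuous_of_ae_sum_sq_eq_one hS (by fun_prop)).symm
    _ = 1 := by simp [integral_congr_ae hS]

theorem integral_diagForm (hS : ∀ᵐ n ∂μ, ∑ i, n i ^ 2 = 1)
    (hO : ∀ O : Matrix ι ι ℝ, O * Oᵀ = 1 → μ.map (mulVec O) = μ) {c : ι → ℝ}
    (hc : ∑ i, c i ^ 2 = 1) : ∫ n, diagForm c n ∂μ = (Fintype.card ι : ℝ)⁻¹ := by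
  unfold diagForm
  rw [integral_finsetSum _ fun i _ =>
    integrable_of_continuous_of_ae_sum_sq_eq_one hS (by fun_prop)]
  simp [integral_const_mul, integral_sq_apply hS hO, ← Finset.sum_mul, hc]

theorem le_integral_comp_diagForm (hS : ∀ᵐ n ∂μ, ∑ i, n i ^ 2 = 1)
    (hO : ∀ O : Matrix ι ι ℝ, O * Oᵀ = 1 → μ.map (mulVec O) = μ) {F : ℝ → ℝ}
    (hF : ConvexOn ℝ (Icc 0 1) F) (hFc : Continuous F) {c : ι → ℝ} (hc : ∑ i, c i ^ 2 = 1) :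
    F (Fintype.card ι : ℝ)⁻¹ ≤ ∫ n, F (diagForm c n) ∂μ := by
  rw [← integral_diagForm hS hO hc]
  exact hF.map_integral_le hFc.continuousOn isClosed_Icc
    (hS.mono fun n hn => diagForm_mem_Icc hc hn)
    (integrable_of_continuous_of_ae_sum_sq_eq_one hS (by fun_prop))
    (integrable_of_continuous_of_ae_sum_sq_eq_one hS (by fun_prop))

theorem integral_comp_diagForm_le (hS : ∀ᵐ n ∂μ, ∑ i, n i ^ 2 = 1)
    (hO : ∀ O : Matrix ι ι ℝ, O * Oᵀ = 1 → μ.map (mulVec O) = μ) {F : ℝ → ℝ}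
    (hF : ConvexOn ℝ (Icc 0 1) F) (hFc : Continuous F) {c : ι → ℝ} (hc : ∑ i, c i ^ 2 = 1)
    (j : ι) : ∫ n, F (diagForm c n) ∂μ ≤ ∫ n, F (n j ^ 2) ∂μ := by
  have hJensen : ∀ᵐ n ∂μ, F (diagForm c n) ≤ ∑ i, c i ^ 2 * F (n i ^ 2) :=
    hS.mono fun n hn => by
      simpa [diagForm] using hF.map_sum_le (t := Finset.univ) (fun i _ => sq_nonneg (c i)) hc
        fun i _ => ⟨sq_nonneg (n i), sq_le_one_of_sum_sq_eq_one hn i⟩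
  calc ∫ n, F (diagForm c n) ∂μ ≤ ∫ n, ∑ i, c i ^ 2 * F (n i ^ 2) ∂μ :=
        integral_mono_ae (integrable_of_continuous_of_ae_sum_sq_eq_one hS (by fun_prop))
          (integrable_of_continuous_of_ae_sum_sq_eq_one hS (by fun_prop)) hJensen
    _ = ∑ i, c i ^ 2 * ∫ n, F (n j ^ 2) ∂μ := by
        rw [integral_finsetSum _ fun i _ =>
          integrable_of_continuous_of_ae_sum_sq_eq_one hS (by fun_prop)]
        simp [integral_const_mul, integral_comp_apply_eq hO (fun x => F (x ^ 2)) _ j]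
    _ = ∫ n, F (n j ^ 2) ∂μ := by rw [← Finset.sum_mul, hc, one_mul]

end InvariantMeasure

theorem IsUniformSphereMeasure.ae_sum_sq_eq_one_s15 {μ : Measure (Fin 3 → ℝ)}
    (hμ : IsUniformSphereMeasure μ) : ∀ᵐ n ∂μ, ∑ i, n i ^ 2 = 1 := by
  simpa [Fin.sum_univ_three, ae_iff] using hμ.2.1

theorem avgG_eq_integral (μ : Measure (Fin 3 → ℝ)) (κ : ℝ) (c : Fin 3 → ℝ) :
    avgG μ κ c = ∫ n, Ibin (κ * √(diagForm c n)) ∂μ := by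
  simp only [avgG, diagForm, Fin.sum_univ_three]

theorem avgG_basis (μ : Measure (Fin 3 → ℝ)) (κ : ℝ) :
    avgG μ κ ![0, 0, 1] = ∫ n, Ibin (κ * √(n 2 ^ 2)) ∂μ := by
  simp [avgG]

theorem avgG_isotropic {μ : Measure (Fin 3 → ℝ)} (hμ : IsUniformSphereMeasure μ) (κ : ℝ) :
    avgG μ κ ![1 / √3, 1 / √3, 1 / √3] = Ibin (κ * √3⁻¹) := by
  have := hμ.1
  rw [avgG_eq_integral, integral_congr_ae (g := fun _ => Ibin (κ * √3⁻¹))]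
  · simp
  · filter_upwards [hμ.ae_sum_sq_eq_one_s15] with n hn
    rw [Fin.sum_univ_three] at hn
    simp [diagForm, Fin.sum_univ_three, ← mul_add, hn]

/-- For `0 < κ ≤ 1` and any unit direction `ĉ`, the average gain is minimal for the
isotropic direction `(1,1,1)/√3` and maximal for the direction `(0,0,1)`. -/
theorem stmt15 (μ : Measure (Fin 3 → ℝ)) (hμ : IsUniformSphereMeasure μ)
    (κ : ℝ) (hκ0 : 0 < κ) (hκ1 : κ ≤ 1)
    (c : Fin 3 → ℝ) (hc : c 0 ^ 2 + c 1 ^ 2 + c 2 ^ 2 = 1) :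
    avgG μ κ ![1 / Real.sqrt 3, 1 / Real.sqrt 3, 1 / Real.sqrt 3] ≤ avgG μ κ c ∧
    avgG μ κ c ≤ avgG μ κ ![0, 0, 1] := by
  have := hμ.1
  have hS := hμ.ae_sum_sq_eq_one_s15
  have hF := convexOn_Ibin_mul_sqrt hκ0 hκ1
  have hFc : Continuous fun t => Ibin (κ * √t) := by fun_prop
  have hc' : ∑ i, c i ^ 2 = 1 := by simpa [Fin.sum_univ_three] using hc
  have hmin := le_integral_comp_diagForm hS hμ.2.2 hF hFc hc'
  rw [Fintype.card_fin, Nat.cast_ofNat] at hmin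
  rw [avgG_isotropic hμ, avgG_basis, avgG_eq_integral]
  exact ⟨hmin, integral_comp_diagForm_le hS hμ.2.2 hF hFc hc' 2⟩
end
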